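/- Let {A_i}_{i∈E} satisfy the Fano-non-Fano condition with abelian group labeling (𝒜, {θ_i}_{i∈E}), and let U, V, W be random variables whose supports each have cardinality |𝒜|, satisfying: U ≐ A_1 | A_2, V ≐ A_1 | A_23, U ≐ V | A_3, W ≐ A_13 | A_2, and U ≐ W | A_3. Then there exists a unique endomorphism g : 𝒜 → 𝒜 and a unique bijective function φ from the support of U to 𝒜 such that φ(U) = θ_1(A_1) − g(θ_2(A_2)) almost surely. -/
import Mathlib


open scoped Classical

noncomputable section

/-- The probability of the event `S` under the probability mass function `p`. -/
def Pr {Ω : Type} (p : Ω → ℝ) (S : Set Ω) : ℝ := ∑' ω : S, p ω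

/-- `p` is a probability mass function on the sample space `Ω`. -/
def IsProb {Ω : Type} (p : Ω → ℝ) : Prop := (∀ ω, 0 ≤ p ω) ∧ Pr p Set.univ = 1

/-- The support of a random variable `X`: the set of values attained with positive
probability. -/
def supp {Ω α : Type} (p : Ω → ℝ) (X : Ω → α) : Set α := {a | 0 < Pr p {ω | X ω = a}}

/-- `X` is almost surely a function of `Y` (written `X ≤ι Y` in the paper). -/
def FuncOf {Ω α β : Type} (p : Ω → ℝ) (X : Ω → α) (Y : Ω → β) : Prop :=
  ∃ f : β → α, Pr p {ω | X ω = f (Y ω)} = 1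

/-- The random variables `X` and `Y` are independent. -/
def IndepRV {Ω α β : Type} (p : Ω → ℝ) (X : Ω → α) (Y : Ω → β) : Prop :=
  ∀ (a : α) (b : β), Pr p {ω | X ω = a ∧ Y ω = b} = Pr p {ω | X ω = a} * Pr p {ω | Y ω = b}

/-- The random variables `X`, `Y`, `Z` are mutually independent:
`X ⟂ Y` and `(X, Y) ⟂ Z`. -/
def Indep3 {Ω α β γ : Type} (p : Ω → ℝ) (X : Ω → α) (Y : Ω → β) (Z : Ω → γ) : Prop :=
  IndepRV p X Y ∧ IndepRV p (fun ω => (X ω, Y ω)) Z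

/-- The predicate `tri(X, Y, Z)`: each variable is a.s. a function of the other two, and the
three variables are pairwise independent. -/
def tri {Ω α β γ : Type} (p : Ω → ℝ) (X : Ω → α) (Y : Ω → β) (Z : Ω → γ) : Prop :=
  FuncOf p X (fun ω => (Y ω, Z ω)) ∧ FuncOf p Y (fun ω => (X ω, Z ω)) ∧
    FuncOf p Z (fun ω => (X ω, Y ω)) ∧
    IndepRV p X Y ∧ IndepRV p X Z ∧ IndepRV p Y Z

/- The ground set `E = {1,2,3,12,13,23,123}` is represented by `Fin 7`, where
`0 ↦ 1`, `1 ↦ 2`, `2 ↦ 3`, `3 ↦ 12`, `4 ↦ 13`, `5 ↦ 23`, `6 ↦ 123`. -/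

/-- `{i,j,k}` is one of the dependent 3-sets of the non-Fano matroid, i.e. one of
`{1,2,12}, {1,3,13}, {2,3,23}, {1,23,123}, {2,13,123}, {3,12,123}`. -/
def inDN (i j k : Fin 7) : Prop :=
  ({i, j, k} : Finset (Fin 7)) ∈
    ({{0, 1, 3}, {0, 2, 4}, {1, 2, 5}, {0, 5, 6}, {1, 4, 6}, {2, 3, 6}} :
      Finset (Finset (Fin 7)))

/-- `{i,j,k}` is a dependent 3-set of the Fano matroid (`D_F = D_N ∪ {{12,13,23}}`). -/
def inDF (i j k : Fin 7) : Prop :=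
  inDN i j k ∨ ({i, j, k} : Finset (Fin 7)) = {3, 4, 5}

/-- `{i,j,k}` is an independent 3-set of the Fano matroid: a 3-element subset of `E`
not in `D_F`. -/
def inIF (i j k : Fin 7) : Prop :=
  ({i, j, k} : Finset (Fin 7)).card = 3 ∧ ¬ inDF i j k

/-- The Fano-non-Fano condition on the seven random variables `A 0, …, A 6`
(representing `A_1, A_2, A_3, A_12, A_13, A_23, A_123`): `tri` holds for every triple in
`D_N`, and mutual independence holds for every triple in `I_F`. -/
def fnf {Ω : Type} (p : Ω → ℝ) {α : Fin 7 → Type} (A : ∀ i, Ω → α i) : Prop :=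
  (∀ i j k, inDN i j k → tri p (A i) (A j) (A k)) ∧
  (∀ i j k, inIF i j k → Indep3 p (A i) (A j) (A k))

/-- `(𝒜, θ)` is an abelian group labeling of `A 0, …, A 6`: `𝒜` is an abelian group,
each `θ i` is a bijection from the support of `A i` onto `𝒜`, and almost surely
`θ_12(A_12) = θ_1(A_1) + θ_2(A_2)`, `θ_13(A_13) = θ_1(A_1) + θ_3(A_3)`,
`θ_23(A_23) = θ_2(A_2) + θ_3(A_3)`, `θ_123(A_123) = θ_1(A_1) + θ_2(A_2) + θ_3(A_3)`. -/
def IsAbelianLabeling {Ω : Type} (p : Ω → ℝ) {α : Fin 7 → Type} (A : ∀ i, Ω → α i)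
    (𝒜 : Type) [AddCommGroup 𝒜] (θ : ∀ i, α i → 𝒜) : Prop :=
  (∀ i, Set.BijOn (θ i) (supp p (A i)) Set.univ) ∧
  Pr p {ω | θ 3 (A 3 ω) = θ 0 (A 0 ω) + θ 1 (A 1 ω)
      ∧ θ 4 (A 4 ω) = θ 0 (A 0 ω) + θ 2 (A 2 ω)
      ∧ θ 5 (A 5 ω) = θ 1 (A 1 ω) + θ 2 (A 2 ω)
      ∧ θ 6 (A 6 ω) = θ 0 (A 0 ω) + θ 1 (A 1 ω) + θ 2 (A 2 ω)} = 1

/-- `X ≐ Y | Z`: given `Z`, the random variables `X` and `Y` carry the same information,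
i.e. `X ≤ι (Z, Y)` and `Y ≤ι (Z, X)`. -/
def eqGiven {Ω α β γ : Type} (p : Ω → ℝ) (X : Ω → α) (Y : Ω → β) (Z : Ω → γ) : Prop :=
  FuncOf p X (fun ω => (Z ω, Y ω)) ∧ FuncOf p Y (fun ω => (Z ω, X ω))


section PrLemmas
variable {Ω : Type} {p : Ω → ℝ}

lemma Pr_eq_ind (S : Set Ω) : Pr p S = ∑' ω, S.indicator p ω := tsum_subtype S p

lemma summable_of_isProb (hp : IsProb p) : Summable p := by
  by_contra h
  have := hp.2
  rw [Pr, tsum_univ, tsum_eq_zero_of_not_summable h] at this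
  norm_num at this

lemma Pr_nonneg (hp : IsProb p) (S : Set Ω) : 0 ≤ Pr p S :=
  tsum_nonneg (fun ω => hp.1 ω)

lemma Pr_mono (hp : IsProb p) {S T : Set Ω} (h : S ⊆ T) : Pr p S ≤ Pr p T := by
  rw [Pr_eq_ind, Pr_eq_ind]
  exact Summable.tsum_le_tsum (fun ω => Set.indicator_le_indicator_of_subset h hp.1 ω)
    ((summable_of_isProb hp).indicator S) ((summable_of_isProb hp).indicator T)

lemma Pr_le_one (hp : IsProb p) (S : Set Ω) : Pr p S ≤ 1 := by
  rw [← hp.2]; exact Pr_mono hp (Set.subset_univ S)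

lemma Pr_add_compl (hp : IsProb p) (S : Set Ω) : Pr p S + Pr p Sᶜ = 1 := by
  rw [Pr_eq_ind, Pr_eq_ind, ← Summable.tsum_add ((summable_of_isProb hp).indicator S)
    ((summable_of_isProb hp).indicator Sᶜ)]
  have : (fun ω => S.indicator p ω + Sᶜ.indicator p ω) = p := by
    ext ω; exact congrFun (S.indicator_self_add_compl p) ω
  rw [this, ← tsum_univ p]; exact hp.2.symm ▸ rfl

lemma Pr_union_le (hp : IsProb p) (S T : Set Ω) : Pr p (S ∪ T) ≤ Pr p S + Pr p T := by
  rw [Pr_eq_ind, Pr_eq_ind, Pr_eq_ind,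
    ← Summable.tsum_add ((summable_of_isProb hp).indicator S) ((summable_of_isProb hp).indicator T)]
  refine Summable.tsum_le_tsum (fun ω => ?_) ((summable_of_isProb hp).indicator (S ∪ T))
    (((summable_of_isProb hp).indicator S).add ((summable_of_isProb hp).indicator T))
  by_cases hS : ω ∈ S
  · by_cases hT : ω ∈ T <;>
      simp [Set.indicator_of_mem, hS, hT, Set.indicator_apply, hp.1 ω]
  · by_cases hT : ω ∈ T <;>
      simp [Set.indicator_apply, hS, hT, hp.1 ω]

lemma Pr_inter_eq (hp : IsProb p) {S : Set Ω} (hS : Pr p S = 1) (T : Set Ω) :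
    Pr p (S ∩ T) = Pr p T := by
  have h1 : Pr p T ≤ Pr p (S ∩ T) := by
    have hsub : T ⊆ (S ∩ T) ∪ Sᶜ := by
      intro ω hω; by_cases h : ω ∈ S
      · exact Or.inl ⟨h, hω⟩
      · exact Or.inr h
    have hc : Pr p Sᶜ = 0 := by linarith [Pr_add_compl hp S]
    calc Pr p T ≤ Pr p ((S ∩ T) ∪ Sᶜ) := Pr_mono hp hsub
      _ ≤ Pr p (S ∩ T) + Pr p Sᶜ := Pr_union_le hp _ _
      _ = Pr p (S ∩ T) := by rw [hc, add_zero]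
  exact le_antisymm (Pr_mono hp Set.inter_subset_right) h1

lemma Pr_inter_one (hp : IsProb p) {S T : Set Ω} (hS : Pr p S = 1) (hT : Pr p T = 1) :
    Pr p (S ∩ T) = 1 := by rw [Pr_inter_eq hp hS, hT]

lemma Pr_and_one (hp : IsProb p) {Q R : Ω → Prop} (hQ : Pr p {ω | Q ω} = 1)
    (hR : Pr p {ω | R ω} = 1) : Pr p {ω | Q ω ∧ R ω} = 1 := by
  have : {ω | Q ω ∧ R ω} = {ω | Q ω} ∩ {ω | R ω} := rfl
  rw [this]; exact Pr_inter_one hp hQ hR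

lemma nonempty_of_Pr_pos {S : Set Ω} (h : 0 < Pr p S) : S.Nonempty := by
  by_contra hne
  rw [Set.not_nonempty_iff_eq_empty] at hne
  rw [hne] at h
  simp [Pr] at h

lemma Pr_singleton (ω : Ω) : Pr p {ω} = p ω := tsum_singleton ω p

lemma mem_supp_of_pos (hp : IsProb p) {γ : Type} (X : Ω → γ) {ω : Ω} (h : 0 < p ω) :
    X ω ∈ supp p X := by
  have hs : ({ω} : Set Ω) ⊆ {ω' | X ω' = X ω} := by intro x hx; simp at hx; simp [hx]
  have := Pr_mono hp hs
  rw [Pr_singleton] at this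
  exact lt_of_lt_of_le h this

lemma Pr_pos_set (hp : IsProb p) : Pr p {ω | 0 < p ω} = 1 := by
  have h0 : Pr p {ω | 0 < p ω}ᶜ = 0 := by
    rw [Pr]
    have : ∀ ω' : ({ω | 0 < p ω}ᶜ : Set Ω), p ω' = 0 := by
      rintro ⟨ω', hω'⟩
      simp only [Set.mem_compl_iff, Set.mem_setOf_eq, not_lt] at hω'
      exact le_antisymm hω' (hp.1 ω')
    simp [this]
  linarith [Pr_add_compl hp {ω | 0 < p ω}]

end PrLemmas

/-- Proposition `end_label`: given `{A_i}_{i∈E}` satisfying the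
Fano-non-Fano condition with abelian group labeling `(𝒜, {θ_i})`, and random variables
`U, V, W` whose supports each have cardinality `|𝒜|` such that `U ≐ A_1 | A_2`,
`V ≐ A_1 | A_23`, `U ≐ V | A_3`, `W ≐ A_13 | A_2`, `U ≐ W | A_3`, there exists a unique
endomorphism `g : 𝒜 → 𝒜` and a unique bijection `φ` from the support of `U` onto `𝒜`
such that `φ(U) = θ_1(A_1) − g(θ_2(A_2))` almost surely. -/
theorem end_label {Ω : Type} (p : Ω → ℝ) (hp : IsProb p)
    {α : Fin 7 → Type} (A : ∀ i, Ω → α i) (hfin : ∀ i, (supp p (A i)).Finite)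
    (𝒜 : Type) [Fintype 𝒜] [AddCommGroup 𝒜] (θ : ∀ i, α i → 𝒜)
    (hfnf : fnf p A) (hlab : IsAbelianLabeling p A 𝒜 θ)
    {βU βV βW : Type} (U : Ω → βU) (V : Ω → βV) (W : Ω → βW)
    (hUcard : (supp p U).ncard = Fintype.card 𝒜)
    (hVcard : (supp p V).ncard = Fintype.card 𝒜)
    (hWcard : (supp p W).ncard = Fintype.card 𝒜)
    (hU : eqGiven p U (A 0) (A 1))
    (hV : eqGiven p V (A 0) (A 5))
    (hUV : eqGiven p U V (A 2))
    (hW : eqGiven p W (A 4) (A 1))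
    (hUW : eqGiven p U W (A 2)) :
    ∃ (g : 𝒜 → 𝒜) (φ : βU → 𝒜),
      (∀ a b : 𝒜, g (a + b) = g a + g b) ∧
      Set.BijOn φ (supp p U) Set.univ ∧
      Pr p {ω | φ (U ω) = θ 0 (A 0 ω) - g (θ 1 (A 1 ω))} = 1 ∧
      (∀ (g' : 𝒜 → 𝒜) (φ' : βU → 𝒜),
        (∀ a b : 𝒜, g' (a + b) = g' a + g' b) →
        Set.BijOn φ' (supp p U) Set.univ →
        Pr p {ω | φ' (U ω) = θ 0 (A 0 ω) - g' (θ 1 (A 1 ω))} = 1 →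
        g' = g ∧ Set.EqOn φ' φ (supp p U)) := by
  classical
  obtain ⟨fU, hfU⟩ := hU.1
  obtain ⟨iU, hiU⟩ := hU.2
  obtain ⟨fV, hfV⟩ := hV.1
  obtain ⟨fS, hfS⟩ := hUV.1
  obtain ⟨fS', hfS'⟩ := hUV.2
  obtain ⟨fW, hfW⟩ := hW.1
  obtain ⟨fT, hfT⟩ := hUW.1
  obtain ⟨fT', hfT'⟩ := hUW.2
  obtain ⟨hbij, hlabPr⟩ := hlab
  set G : Set Ω := {ω | 0 < p ω ∧
      (θ 3 (A 3 ω) = θ 0 (A 0 ω) + θ 1 (A 1 ω)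
        ∧ θ 4 (A 4 ω) = θ 0 (A 0 ω) + θ 2 (A 2 ω)
        ∧ θ 5 (A 5 ω) = θ 1 (A 1 ω) + θ 2 (A 2 ω)
        ∧ θ 6 (A 6 ω) = θ 0 (A 0 ω) + θ 1 (A 1 ω) + θ 2 (A 2 ω)) ∧
      U ω = fU (A 1 ω, A 0 ω) ∧ A 0 ω = iU (A 1 ω, U ω) ∧
      V ω = fV (A 5 ω, A 0 ω) ∧ U ω = fS (A 2 ω, V ω) ∧ V ω = fS' (A 2 ω, U ω) ∧
      W ω = fW (A 1 ω, A 4 ω) ∧ U ω = fT (A 2 ω, W ω) ∧ W ω = fT' (A 2 ω, U ω)} with hGdef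
  have hG : Pr p G = 1 :=
    Pr_and_one hp (Pr_pos_set hp) <| Pr_and_one hp hlabPr <| Pr_and_one hp hfU <|
      Pr_and_one hp hiU <| Pr_and_one hp hfV <| Pr_and_one hp hfS <| Pr_and_one hp hfS' <|
      Pr_and_one hp hfW <| Pr_and_one hp hfT hfT'
  have mPos : ∀ ω ∈ G, 0 < p ω := fun ω h => h.1
  have mLab4 : ∀ ω ∈ G, θ 4 (A 4 ω) = θ 0 (A 0 ω) + θ 2 (A 2 ω) := fun ω h => h.2.1.2.1
  have mLab5 : ∀ ω ∈ G, θ 5 (A 5 ω) = θ 1 (A 1 ω) + θ 2 (A 2 ω) := fun ω h => h.2.1.2.2.1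
  have mEU : ∀ ω ∈ G, U ω = fU (A 1 ω, A 0 ω) := fun ω h => h.2.2.1
  have mEiU : ∀ ω ∈ G, A 0 ω = iU (A 1 ω, U ω) := fun ω h => h.2.2.2.1
  have mEV : ∀ ω ∈ G, V ω = fV (A 5 ω, A 0 ω) := fun ω h => h.2.2.2.2.1
  have mES : ∀ ω ∈ G, U ω = fS (A 2 ω, V ω) := fun ω h => h.2.2.2.2.2.1
  have mES' : ∀ ω ∈ G, V ω = fS' (A 2 ω, U ω) := fun ω h => h.2.2.2.2.2.2.1
  have mEW : ∀ ω ∈ G, W ω = fW (A 1 ω, A 4 ω) := fun ω h => h.2.2.2.2.2.2.2.1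
  have mET : ∀ ω ∈ G, U ω = fT (A 2 ω, W ω) := fun ω h => h.2.2.2.2.2.2.2.2.1
  have mET' : ∀ ω ∈ G, W ω = fT' (A 2 ω, U ω) := fun ω h => h.2.2.2.2.2.2.2.2.2
  have hsupp : ∀ (i : Fin 7), ∀ ω ∈ G, A i ω ∈ supp p (A i) :=
    fun i ω hω => mem_supp_of_pos hp (A i) (mPos ω hω)
  have hsuppU : ∀ ω ∈ G, U ω ∈ supp p U := fun ω hω => mem_supp_of_pos hp U (mPos ω hω)
  have hinj : ∀ (i : Fin 7) (ω ω' : Ω), ω ∈ G → ω' ∈ G →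
      θ i (A i ω) = θ i (A i ω') → A i ω = A i ω' :=
    fun i ω ω' hω hω' h => (hbij i).2.1 (hsupp i ω hω) (hsupp i ω' hω') h
  have hI3 : Indep3 p (A 0) (A 1) (A 2) := hfnf.2 0 1 2 (by unfold inIF inDF inDN; decide)
  -- existence of sample points with prescribed labels, inside any full-measure set
  have hatom : ∀ (H : Set Ω), Pr p H = 1 → ∀ a b c : 𝒜,
      ∃ ω, ω ∈ H ∧ θ 0 (A 0 ω) = a ∧ θ 1 (A 1 ω) = b ∧ θ 2 (A 2 ω) = c := by
    intro H hH a b c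
    obtain ⟨x, hx, hxa⟩ := (hbij 0).2.2 (Set.mem_univ a)
    obtain ⟨y, hy, hyb⟩ := (hbij 1).2.2 (Set.mem_univ b)
    obtain ⟨z, hz, hzc⟩ := (hbij 2).2.2 (Set.mem_univ c)
    have hpos : 0 < Pr p {ω | A 0 ω = x ∧ A 1 ω = y ∧ A 2 ω = z} := by
      have e1 : {ω | A 0 ω = x ∧ A 1 ω = y ∧ A 2 ω = z}
          = {ω | (fun ω => (A 0 ω, A 1 ω)) ω = (x, y) ∧ A 2 ω = z} := by
        ext ω; simp [Prod.ext_iff, and_assoc]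
      rw [e1, hI3.2 (x, y) z]
      have e2 : {ω | (fun ω => (A 0 ω, A 1 ω)) ω = (x, y)} = {ω | A 0 ω = x ∧ A 1 ω = y} := by
        ext ω; simp [Prod.ext_iff]
      rw [e2, hI3.1 x y]
      exact mul_pos (mul_pos hx hy) hz
    have hPrInt := Pr_inter_eq hp hH {ω | A 0 ω = x ∧ A 1 ω = y ∧ A 2 ω = z}
    obtain ⟨ω, hωH, hω0, hω1, hω2⟩ := nonempty_of_Pr_pos (by rw [hPrInt]; exact hpos)
    exact ⟨ω, hωH, by rw [hω0]; exact hxa, by rw [hω1]; exact hyb, by rw [hω2]; exact hzc⟩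
  choose Ω₃ hΩ₃G hΩ₃0 hΩ₃1 hΩ₃2 using hatom G hG
  -- U is determined by the labels of A 0 and A 1
  have keyU : ∀ ω ω', ω ∈ G → ω' ∈ G → θ 0 (A 0 ω) = θ 0 (A 0 ω') →
      θ 1 (A 1 ω) = θ 1 (A 1 ω') → U ω = U ω' := by
    intro ω ω' hω hω' h0 h1
    rw [mEU ω hω, mEU ω' hω', hinj 0 ω ω' hω hω' h0, hinj 1 ω ω' hω hω' h1]
  -- the ρ-step (via V and A 23)
  have Lρ : ∀ ω₁ ω₁' ω₂ ω₂', ω₁ ∈ G → ω₁' ∈ G → ω₂ ∈ G → ω₂' ∈ G →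
      θ 0 (A 0 ω₁) = θ 0 (A 0 ω₁') →
      θ 1 (A 1 ω₁) + θ 2 (A 2 ω₁) = θ 1 (A 1 ω₁') + θ 2 (A 2 ω₁') →
      θ 0 (A 0 ω₂) = θ 0 (A 0 ω₂') →
      θ 1 (A 1 ω₂) + θ 2 (A 2 ω₂) = θ 1 (A 1 ω₂') + θ 2 (A 2 ω₂') →
      θ 2 (A 2 ω₁) = θ 2 (A 2 ω₂) → θ 2 (A 2 ω₁') = θ 2 (A 2 ω₂') →
      U ω₁' = U ω₂' → U ω₁ = U ω₂ := by
    intro ω₁ ω₁' ω₂ ω₂' h₁ h₁' h₂ h₂' e0₁ e5₁ e0₂ e5₂ c2 c2' hU'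
    have hV1 : V ω₁ = V ω₁' := by
      have e5 : θ 5 (A 5 ω₁) = θ 5 (A 5 ω₁') := by
        rw [mLab5 ω₁ h₁, mLab5 ω₁' h₁', e5₁]
      rw [mEV ω₁ h₁, mEV ω₁' h₁', hinj 5 _ _ h₁ h₁' e5, hinj 0 _ _ h₁ h₁' e0₁]
    have hV2 : V ω₂ = V ω₂' := by
      have e5 : θ 5 (A 5 ω₂) = θ 5 (A 5 ω₂') := by
        rw [mLab5 ω₂ h₂, mLab5 ω₂' h₂', e5₂]
      rw [mEV ω₂ h₂, mEV ω₂' h₂', hinj 5 _ _ h₂ h₂' e5, hinj 0 _ _ h₂ h₂' e0₂]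
    rw [mES ω₁ h₁, mES ω₂ h₂, hV1, hV2, mES' ω₁' h₁', mES' ω₂' h₂', hU',
      hinj 2 _ _ h₁ h₂ c2, hinj 2 _ _ h₁' h₂' c2']
  -- the π-step (via W and A 13)
  have Lπ : ∀ ω₁ ω₁' ω₂ ω₂', ω₁ ∈ G → ω₁' ∈ G → ω₂ ∈ G → ω₂' ∈ G →
      θ 1 (A 1 ω₁) = θ 1 (A 1 ω₁') →
      θ 0 (A 0 ω₁) + θ 2 (A 2 ω₁) = θ 0 (A 0 ω₁') + θ 2 (A 2 ω₁') →
      θ 1 (A 1 ω₂) = θ 1 (A 1 ω₂') →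
      θ 0 (A 0 ω₂) + θ 2 (A 2 ω₂) = θ 0 (A 0 ω₂') + θ 2 (A 2 ω₂') →
      θ 2 (A 2 ω₁) = θ 2 (A 2 ω₂) → θ 2 (A 2 ω₁') = θ 2 (A 2 ω₂') →
      U ω₁' = U ω₂' → U ω₁ = U ω₂ := by
    intro ω₁ ω₁' ω₂ ω₂' h₁ h₁' h₂ h₂' e1₁ e4₁ e1₂ e4₂ c2 c2' hU'
    have hW1 : W ω₁ = W ω₁' := by
      have e4 : θ 4 (A 4 ω₁) = θ 4 (A 4 ω₁') := by
        rw [mLab4 ω₁ h₁, mLab4 ω₁' h₁', e4₁]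
      rw [mEW ω₁ h₁, mEW ω₁' h₁', hinj 4 _ _ h₁ h₁' e4, hinj 1 _ _ h₁ h₁' e1₁]
    have hW2 : W ω₂ = W ω₂' := by
      have e4 : θ 4 (A 4 ω₂) = θ 4 (A 4 ω₂') := by
        rw [mLab4 ω₂ h₂, mLab4 ω₂' h₂', e4₂]
      rw [mEW ω₂ h₂, mEW ω₂' h₂', hinj 4 _ _ h₂ h₂' e4, hinj 1 _ _ h₂ h₂' e1₂]
    rw [mET ω₁ h₁, mET ω₂ h₂, hW1, hW2, mET' ω₁' h₁', mET' ω₂' h₂', hU',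
      hinj 2 _ _ h₁ h₂ c2, hinj 2 _ _ h₁' h₂' c2']
  set F : 𝒜 → 𝒜 → βU := fun a b => U (Ω₃ a b 0) with hFdef
  have hFU : ∀ a b, F a b = U (Ω₃ a b 0) := fun a b => by rw [hFdef]
  have hFc : ∀ a b c, U (Ω₃ a b c) = F a b := fun a b c => by
    rw [hFU]
    exact keyU _ _ (hΩ₃G a b c) (hΩ₃G a b 0)
      (by rw [hΩ₃0, hΩ₃0]) (by rw [hΩ₃1, hΩ₃1])
  have hFω : ∀ ω ∈ G, U ω = F (θ 0 (A 0 ω)) (θ 1 (A 1 ω)) := by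
    intro ω hω
    rw [hFU]
    exact keyU ω _ hω (hΩ₃G _ _ 0) (by rw [hΩ₃0]) (by rw [hΩ₃1])
  have hE2 : ∀ a b e : 𝒜, F 0 b = F e 0 → F a b = F (a + e) 0 := by
    intro a b e h
    rw [hFU, hFU]
    refine Lπ (Ω₃ a b 0) (Ω₃ 0 b a) (Ω₃ (a + e) 0 0) (Ω₃ e 0 a)
      (hΩ₃G _ _ _) (hΩ₃G _ _ _) (hΩ₃G _ _ _) (hΩ₃G _ _ _) ?_ ?_ ?_ ?_ ?_ ?_ ?_
    · rw [hΩ₃1, hΩ₃1]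
    · rw [hΩ₃0, hΩ₃0, hΩ₃2, hΩ₃2]; abel
    · rw [hΩ₃1, hΩ₃1]
    · rw [hΩ₃0, hΩ₃0, hΩ₃2, hΩ₃2]; abel
    · rw [hΩ₃2, hΩ₃2]
    · rw [hΩ₃2, hΩ₃2]
    · rw [hFc, hFc, h]
  have hE3 : ∀ b b' e' : 𝒜, F 0 b' = F e' 0 → F 0 (b + b') = F e' b := by
    intro b b' e' h
    rw [hFU, hFU]
    refine Lρ (Ω₃ 0 (b + b') 0) (Ω₃ 0 b' b) (Ω₃ e' b 0) (Ω₃ e' 0 b)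
      (hΩ₃G _ _ _) (hΩ₃G _ _ _) (hΩ₃G _ _ _) (hΩ₃G _ _ _) ?_ ?_ ?_ ?_ ?_ ?_ ?_
    · rw [hΩ₃0, hΩ₃0]
    · rw [hΩ₃1, hΩ₃1, hΩ₃2, hΩ₃2]; abel
    · rw [hΩ₃0, hΩ₃0]
    · rw [hΩ₃1, hΩ₃1, hΩ₃2, hΩ₃2]; abel
    · rw [hΩ₃2, hΩ₃2]
    · rw [hΩ₃2, hΩ₃2]
    · rw [hFc, hFc, h]
  have InjF : ∀ a a' b : 𝒜, F a b = F a' b → a = a' := by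
    intro a a' b h
    rw [hFU, hFU] at h
    have e1 : A 1 (Ω₃ a b 0) = A 1 (Ω₃ a' b 0) :=
      hinj 1 _ _ (hΩ₃G a b 0) (hΩ₃G a' b 0) (by rw [hΩ₃1, hΩ₃1])
    have e0 : A 0 (Ω₃ a b 0) = A 0 (Ω₃ a' b 0) := by
      rw [mEiU _ (hΩ₃G a b 0), mEiU _ (hΩ₃G a' b 0), e1, h]
    calc a = θ 0 (A 0 (Ω₃ a b 0)) := (hΩ₃0 a b 0).symm
      _ = θ 0 (A 0 (Ω₃ a' b 0)) := by rw [e0]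
      _ = a' := hΩ₃0 a' b 0
  have hFsupp : ∀ a b, F a b ∈ supp p U := by
    intro a b; rw [hFU]; exact hsuppU _ (hΩ₃G a b 0)
  have hne𝒜 : Nonempty 𝒜 := ⟨0⟩
  have hUfin : (supp p U).Finite := by
    by_contra h
    rw [Set.Infinite.ncard h] at hUcard
    exact absurd hUcard.symm (Fintype.card_pos (α := 𝒜)).ne'
  have himg : (fun a => F a 0) '' Set.univ = supp p U := by
    apply Set.eq_of_subset_of_ncard_le
    · rintro u ⟨a, -, rfl⟩; exact hFsupp a 0
    · rw [Set.ncard_image_of_injOn (fun a _ a' _ h => InjF a a' 0 h), Set.ncard_univ,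
        Nat.card_eq_fintype_card, hUcard]
    · exact hUfin
  have hFsurj : ∀ u ∈ supp p U, ∃ a, F a 0 = u := by
    intro u hu
    rw [← himg] at hu
    obtain ⟨a, -, ha⟩ := hu
    exact ⟨a, ha⟩
  set φ : βU → 𝒜 := fun u => if h : ∃ a, F a 0 = u then h.choose else 0 with hφdef
  have hφF : ∀ a, φ (F a 0) = a := by
    intro a
    have hex : ∃ a', F a' 0 = F a 0 := ⟨a, rfl⟩
    have : φ (F a 0) = hex.choose := by rw [hφdef]; simp only [dif_pos hex]
    rw [this]
    exact InjF _ a 0 hex.choose_spec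
  have hφinv : ∀ u ∈ supp p U, F (φ u) 0 = u := by
    intro u hu
    obtain ⟨a, rfl⟩ := hFsurj u hu
    rw [hφF]
  have hφbij : Set.BijOn φ (supp p U) Set.univ := by
    refine ⟨fun u _ => Set.mem_univ _, ?_, ?_⟩
    · intro u hu u' hu' h
      obtain ⟨a, rfl⟩ := hFsurj u hu
      obtain ⟨a', rfl⟩ := hFsurj u' hu'
      rw [hφF, hφF] at h
      rw [h]
    · intro a _
      exact ⟨F a 0, hFsupp a 0, hφF a⟩
  set g : 𝒜 → 𝒜 := fun b => -φ (F 0 b) with hgdef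
  have key : ∀ a b, φ (F a b) = a - g b := by
    intro a b
    have he : F 0 b = F (φ (F 0 b)) 0 := (hφinv _ (hFsupp 0 b)).symm
    rw [hE2 a b _ he, hφF]
    simp only [hgdef, sub_neg_eq_add]
  have hgadd : ∀ b b' : 𝒜, g (b + b') = g b + g b' := by
    intro b b'
    have he' : F 0 b' = F (φ (F 0 b')) 0 := (hφinv _ (hFsupp 0 b')).symm
    have h3 := hE3 b b' _ he'
    have h4 : φ (F 0 (b + b')) = φ (F 0 b') - g b := by rw [h3, key]
    have hgb : g (b + b') = -φ (F 0 (b + b')) := by rw [hgdef]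
    have hgb' : g b' = -φ (F 0 b') := by rw [hgdef]
    rw [hgb, h4, hgb']
    abel
  have hPrφ : Pr p {ω | φ (U ω) = θ 0 (A 0 ω) - g (θ 1 (A 1 ω))} = 1 := by
    refine le_antisymm (Pr_le_one hp _) ?_
    rw [← hG]
    refine Pr_mono hp ?_
    intro ω hω
    simp only [Set.mem_setOf_eq]
    rw [hFω ω hω, key]
  refine ⟨g, φ, hgadd, hφbij, hPrφ, ?_⟩
  intro g' φ' hg'add hφ'bij hPr'
  have hGE' : Pr p (G ∩ {ω | φ' (U ω) = θ 0 (A 0 ω) - g' (θ 1 (A 1 ω))}) = 1 :=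
    Pr_inter_one hp hG hPr'
  have hF' : ∀ a b, φ' (F a b) = a - g' b := by
    intro a b
    obtain ⟨ω, hω, h0, h1, -⟩ := hatom _ hGE' a b 0
    have hUF : U ω = F a b := by rw [hFω ω hω.1, h0, h1]
    have he := hω.2
    simp only [Set.mem_setOf_eq] at he
    rw [hUF, h0, h1] at he
    exact he
  have hg'0 : g' 0 = 0 := by
    have h00 := hg'add 0 0
    rw [add_zero] at h00
    exact left_eq_add.mp h00
  have hEq : Set.EqOn φ' φ (supp p U) := by
    intro u hu
    obtain ⟨a, rfl⟩ := hFsurj u hu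
    rw [hφF, hF', hg'0, sub_zero]
  refine ⟨?_, hEq⟩
  funext b
  have h1 := hF' 0 b
  rw [hEq (hFsupp 0 b), key 0 b] at h1
  exact (sub_right_injective h1).symm


end
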